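/- arXiv:2001.02482 — 2 statements merged into one kernel-verified Lean document; each statement's English description precedes it below -/
import Mathlib

section
/- For α, β > 0, φ_s ∈ [0,1), and threshold Γ ≥ 1, the collision probability ψ_s(Γ) = θ_{(1,0)}·(1 − e^{-α}) / ((1−φ_s) e^{-α}), where θ_{(1,0)} = 1/(Γ − 1 + (α+β)/(β e^{-α}(1−φ_s)) + (α/((1−e^{-(α+β)})β))(1 − e^{-(α+β)(Γ−1)})), is a strictly decreasing function of Γ (over positive integers Γ). -/
theorem stmt6 (α β φs : ℝ) (hα : 0 < α) (hβ : 0 < β) (hφ : φs ∈ Set.Ico (0:ℝ) 1)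
    (ψ : ℕ → ℝ)
    (hψ : ∀ Γ : ℕ, ψ Γ =
      (1 / ((Γ:ℝ) - 1 + (α+β)/(β * Real.exp (-α) * (1-φs)) +
        (α / ((1 - Real.exp (-(α+β))) * β)) * (1 - Real.exp (-(α+β)*((Γ:ℝ)-1))))) *
      (1 - Real.exp (-α)) / ((1 - φs) * Real.exp (-α))) :
    ∀ Γ₁ Γ₂ : ℕ, 1 ≤ Γ₁ → Γ₁ < Γ₂ → ψ Γ₂ < ψ Γ₁ := by
  intro Γ₁ Γ₂ h1 h12
  obtain ⟨hφ0, hφ1⟩ := hφ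
  have hφs : (0:ℝ) < 1 - φs := by linarith
  have hk : 0 < α + β := by linarith
  have hek : Real.exp (-(α+β)) < 1 := by
    rw [Real.exp_lt_one_iff]; linarith
  have heα : Real.exp (-α) < 1 := by
    rw [Real.exp_lt_one_iff]; linarith
  have hA : 0 < (α+β)/(β * Real.exp (-α) * (1-φs)) :=
    div_pos hk (by positivity)
  have hB : 0 < α / ((1 - Real.exp (-(α+β))) * β) :=
    div_pos hα (by nlinarith)
  set A := (α+β)/(β * Real.exp (-α) * (1-φs)) with hAdef
  set B := α / ((1 - Real.exp (-(α+β))) * β) with hBdef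
  set D : ℕ → ℝ := fun Γ => (Γ:ℝ) - 1 + A + B * (1 - Real.exp (-(α+β)*((Γ:ℝ)-1))) with hD
  have hDpos : ∀ Γ : ℕ, 1 ≤ Γ → 0 < D Γ := by
    intro Γ hΓ
    have h0 : (1:ℝ) ≤ (Γ:ℝ) := by exact_mod_cast hΓ
    have : Real.exp (-(α+β)*((Γ:ℝ)-1)) ≤ 1 := by
      rw [Real.exp_le_one_iff]; nlinarith
    have : 0 ≤ B * (1 - Real.exp (-(α+β)*((Γ:ℝ)-1))) := by nlinarith
    simp only [hD]; nlinarith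
  have hlt : D Γ₁ < D Γ₂ := by
    have h0 : (Γ₁:ℝ) < (Γ₂:ℝ) := by exact_mod_cast h12
    have hexp : Real.exp (-(α+β)*((Γ₂:ℝ)-1)) < Real.exp (-(α+β)*((Γ₁:ℝ)-1)) := by
      apply Real.exp_lt_exp.2; nlinarith
    simp only [hD]; nlinarith
  have hc : 0 < (1 - Real.exp (-α)) / ((1 - φs) * Real.exp (-α)) := by
    apply div_pos (by linarith) (by positivity)
  rw [hψ Γ₁, hψ Γ₂]
  have hinv : 1 / D Γ₂ < 1 / D Γ₁ :=
    one_div_lt_one_div_of_lt (hDpos Γ₁ h1) hlt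
  have : (1 / D Γ₂) * ((1 - Real.exp (-α)) / ((1 - φs) * Real.exp (-α)))
       < (1 / D Γ₁) * ((1 - Real.exp (-α)) / ((1 - φs) * Real.exp (-α))) :=
    mul_lt_mul_of_pos_right hinv hc
  simpa [hD, mul_div_assoc] using this
end

section
/- Define, for states ordered by age with current state s = (δ,0) and successor candidates, the tail transition function q(k|s,a) by: q(k|s,0) = 1 for k ≤ δ+1 and 0 for k > δ+1; q(k|s,1) = 1 for k = 1 (the reset state), q(k|s,1) = 1 − e^{-α}(1−φ_s) for 1 < k ≤ δ+1, and 0 for k > δ+1. Then for δ⁺ ≥ δ⁻ and a⁺ ≥ a⁻ in {0,1}, q(k|(δ⁺,0),a⁺) + q(k|(δ⁻,0),a⁻) ≤ q(k|(δ⁺,0),a⁻) + q(k|(δ⁻,0),a⁺) for every k. -/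
theorem stmt10 (α φs : ℝ) (hα : 0 < α) (hφ : φs ∈ Set.Ico (0:ℝ) 1)
    (q : ℕ → ℕ → ℕ → ℝ)
    (hq0 : ∀ k δ : ℕ, q k δ 0 = if k ≤ δ + 1 then 1 else 0)
    (hq1 : ∀ k δ : ℕ, q k δ 1 =
      if k = 1 then 1
      else if k ≤ δ + 1 then 1 - Real.exp (-α) * (1 - φs) else 0) :
    ∀ δp δm : ℕ, 1 ≤ δm → δm ≤ δp → ∀ ap am : ℕ, am ≤ ap → ap ≤ 1 → ∀ k : ℕ, 1 ≤ k →
      q k δp ap + q k δm am ≤ q k δp am + q k δm ap := by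
  obtain ⟨hφ0, hφ1⟩ := hφ
  have hE0 : 0 ≤ Real.exp (-α) * (1 - φs) :=
    mul_nonneg (Real.exp_pos _).le (by linarith)
  intro δp δm hδm hδ ap am ham hap k hk
  interval_cases ap <;> interval_cases am
  · exact le_refl _
  · rw [hq0, hq0, hq1, hq1]
    split_ifs <;> first | linarith | omega
  · exact le_refl _
end
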